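/- arXiv:2602.22825 — 2 statements merged into one kernel-verified Lean document; each statement's English description precedes it below -/
import Mathlib

section
/- For Q(R) = 2·arctan(R²), the function Θ(R) = (1 − 8R⁴·log R − R⁸)/(16R²(1+R⁴)) satisfies Θ''(R) + (1/R)Θ'(R) − (4/R²)·cos(2Q(R))·Θ(R) = 0 for all R > 0. -/
/-!
Write Θ = N/D with N = 1 − 8R⁴ log R − R⁸ and D = 16R²(1 + R⁴). The second derivative of a
quotient is a rational expression in N, N', N'', D, D', D'', and cos(4 arctan x) is rational in x,
so after clearing denominators the equation is a polynomial identity in R and log R.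
-/

open Real Filter Topology

theorem Real.cos_four_mul_arctan (x : ℝ) :
    cos (2 * (2 * arctan x)) = (1 - 6 * x ^ 2 + x ^ 4) / (1 + x ^ 2) ^ 2 := by
  rw [cos_two_mul, cos_two_mul, cos_sq_arctan]
  field_simp
  ring

theorem deriv_deriv_div {𝕜 : Type*} [NontriviallyNormedField 𝕜] {N D N' D' : 𝕜 → 𝕜}
    {N'' D'' x : 𝕜} (hN : ∀ᶠ y in 𝓝 x, HasDerivAt N (N' y) y)
    (hD : ∀ᶠ y in 𝓝 x, HasDerivAt D (D' y) y) (hN' : HasDerivAt N' N'' x)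
    (hD' : HasDerivAt D' D'' x) (hDx : D x ≠ 0) :
    deriv (deriv fun y => N y / D y) x =
      ((N'' * D x - N x * D'') * D x - 2 * D' x * (N' x * D x - N x * D' x)) / D x ^ 3 := by
  have hD_ne : ∀ᶠ y in 𝓝 x, D y ≠ 0 := hD.self_of_nhds.continuousAt.eventually_ne hDx
  have h_deriv : deriv (fun y => N y / D y) =ᶠ[𝓝 x]
      fun y => (N' y * D y - N y * D' y) / D y ^ 2 := by
    filter_upwards [hN, hD, hD_ne] with y hNy hDy hy
    exact (hNy.div hDy hy).deriv
  rw [h_deriv.deriv_eq]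
  have hN_at := hN.self_of_nhds
  have hD_at := hD.self_of_nhds
  refine (((hN'.fun_mul hD_at).fun_sub (hN_at.fun_mul hD')).fun_div (hD_at.fun_pow 2)
    (pow_ne_zero 2 hDx)).deriv.trans ?_
  field_simp
  ring

theorem hasDerivAt_const_mul_pow_succ_mul_log (c : ℝ) (n : ℕ) {x : ℝ} (hx : x ≠ 0) :
    HasDerivAt (fun y => c * y ^ (n + 1) * log y) (c * ((n + 1) * x ^ n * log x + x ^ n)) x := by
  refine (((hasDerivAt_pow (n + 1) x).const_mul c).fun_mul (hasDerivAt_log hx)).congr_deriv ?_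
  field_simp
  push_cast
  ring

theorem hasDerivAt_theta_numerator {x : ℝ} (hx : x ≠ 0) :
    HasDerivAt (fun y => 1 - 8 * y ^ 4 * log y - y ^ 8)
      (-32 * x ^ 3 * log x - 8 * x ^ 3 - 8 * x ^ 7) x :=
  (((hasDerivAt_const x 1).fun_sub (hasDerivAt_const_mul_pow_succ_mul_log 8 3 hx)).fun_sub
    (hasDerivAt_pow 8 x)).congr_deriv (by push_cast; ring)

theorem hasDerivAt_theta_numerator_deriv {x : ℝ} (hx : x ≠ 0) :
    HasDerivAt (fun y => -32 * y ^ 3 * log y - 8 * y ^ 3 - 8 * y ^ 7)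
      (-96 * x ^ 2 * log x - 56 * x ^ 2 - 56 * x ^ 6) x :=
  (((hasDerivAt_const_mul_pow_succ_mul_log (-32) 2 hx).fun_sub
    ((hasDerivAt_pow 3 x).const_mul 8)).fun_sub ((hasDerivAt_pow 7 x).const_mul 8)).congr_deriv
    (by push_cast; ring)

theorem hasDerivAt_theta_denominator (x : ℝ) :
    HasDerivAt (fun y => 16 * y ^ 2 * (1 + y ^ 4)) (32 * x + 96 * x ^ 5) x :=
  (((hasDerivAt_pow 2 x).const_mul 16).fun_mul ((hasDerivAt_pow 4 x).const_add 1)).congr_deriv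
    (by push_cast; ring)

theorem hasDerivAt_theta_denominator_deriv (x : ℝ) :
    HasDerivAt (fun y => 32 * y + 96 * y ^ 5) (32 + 480 * x ^ 4) x :=
  (((hasDerivAt_id x).const_mul 32).fun_add ((hasDerivAt_pow 5 x).const_mul 96)).congr_deriv
    (by push_cast; ring)

/-- For `Q(R) = 2 arctan R²`, the second fundamental solution
`Θ(R) = (1 − 8R⁴ log R − R⁸)/(16R²(1+R⁴))` satisfies
`Θ'' + Θ'/R − (4/R²)cos(2Q(R))Θ = 0` for all `R > 0`. -/
theorem second_solution_Theta :
    ∀ R : ℝ, 0 < R →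
      deriv (deriv (fun s : ℝ => (1 - 8 * s ^ 4 * Real.log s - s ^ 8) / (16 * s ^ 2 * (1 + s ^ 4)))) R
        + (1 / R) * deriv (fun s : ℝ => (1 - 8 * s ^ 4 * Real.log s - s ^ 8) / (16 * s ^ 2 * (1 + s ^ 4))) R
        - (4 / R ^ 2) * Real.cos (2 * (2 * Real.arctan (R ^ 2)))
            * ((1 - 8 * R ^ 4 * Real.log R - R ^ 8) / (16 * R ^ 2 * (1 + R ^ 4)))
      = 0 := by
  intro R hR
  have hden : 16 * R ^ 2 * (1 + R ^ 4) ≠ 0 := by positivity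
  have hnum : ∀ᶠ x in 𝓝 R, HasDerivAt (fun y => 1 - 8 * y ^ 4 * log y - y ^ 8)
      (-32 * x ^ 3 * log x - 8 * x ^ 3 - 8 * x ^ 7) x :=
    (eventually_ne_nhds hR.ne').mono fun x hx => hasDerivAt_theta_numerator hx
  rw [deriv_deriv_div hnum (.of_forall hasDerivAt_theta_denominator)
      (hasDerivAt_theta_numerator_deriv hR.ne') (hasDerivAt_theta_denominator_deriv R) hden,
    ((hasDerivAt_theta_numerator hR.ne').fun_div (hasDerivAt_theta_denominator R) hden).deriv,
    cos_four_mul_arctan]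
  field_simp
  ring
end

section
/- For the operator H = −∂_r² + 15/(4r²) − 32r²/(1+r⁴)², the function ϕ₀(r) = 4r^{5/2}/(1+r⁴) satisfies Hϕ₀ = 0, ϕ₀ ∈ L²(0,∞), and ‖ϕ₀‖²_{L²(0,∞)} = 2π. -/
/-!
Write `ϕ₀ = √r · Φ` with `Φ = 4r²/(1+r⁴)`. Conjugation by `√r` turns `-∂² + 15/(4r²)` into
`√r (-∂² - r⁻¹∂ + 4/r²)`, so `Hϕ₀ = √r · LΦ`, and `LΦ = 0` is an identity of rational functions.
For the norm, `ϕ₀² = 16r⁵/(1+r⁴)²` has the antiderivative `4 arctan r² - Φ`, which vanishes at `0`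
and tends to `2π` at infinity.
-/

open MeasureTheory Set Filter Topology Real

lemma rpow_five_halves {s : ℝ} (hs : 0 ≤ s) : s ^ ((5 : ℝ) / 2) = √s * s ^ 2 := by
  rw [sqrt_eq_rpow, ← rpow_natCast, ← rpow_add' hs (by norm_num)]
  norm_num

lemma sq_four_rpow_five_halves_div {r : ℝ} (hr : 0 ≤ r) :
    (4 * r ^ ((5 : ℝ) / 2) / (1 + r ^ 4)) ^ 2 = 16 * r ^ 5 / (1 + r ^ 4) ^ 2 := by
  rw [rpow_five_halves hr, div_pow, mul_pow, mul_pow, sq_sqrt hr]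
  ring

lemma deriv_deriv_sqrt_mul {Φ Φ' : ℝ → ℝ} {Φ'' r : ℝ} (hr : 0 < r)
    (hΦ : ∀ s, 0 < s → HasDerivAt Φ (Φ' s) s) (hΦ' : HasDerivAt Φ' Φ'' r) :
    deriv (deriv fun s => √s * Φ s) r = √r * (Φ'' + Φ' r / r - Φ r / (4 * r ^ 2)) := by
  have hsqrt (s : ℝ) (hs : 0 < s) : HasDerivAt (√·) (1 / (2 * √s)) s := hasDerivAt_sqrt hs.ne'
  have hfirst : deriv (fun s => √s * Φ s) =ᶠ[𝓝 r] fun s => Φ s / (2 * √s) + √s * Φ' s := by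
    filter_upwards [Ioi_mem_nhds hr] with s hs
    refine ((hsqrt s hs).mul (hΦ s hs)).deriv.trans ?_
    field_simp
  have hsecond := ((hΦ r hr).fun_div ((hsqrt r hr).const_mul 2) (by positivity)).add
    ((hsqrt r hr).mul hΦ')
  rw [hfirst.deriv_eq]
  refine (hsecond.congr_deriv ?_).deriv
  have hsqrt_pos : 0 < √r := sqrt_pos.2 hr
  have hsqrt_pow_four : √r ^ 4 = r ^ 2 := by rw [pow_mul √r 2 2, sq_sqrt hr.le]
  field_simp
  rw [hsqrt_pow_four, sq_sqrt hr.le]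
  ring

/-- `Φ = r Q'(r)` for `Q = 2 arctan r²` generates the scaling symmetry of `Q`, which is why it
lies in the kernel of the linearized operator. -/
noncomputable def scalingMode (r : ℝ) : ℝ := 4 * r ^ 2 / (1 + r ^ 4)

lemma hasDerivAt_scalingMode (s : ℝ) :
    HasDerivAt scalingMode (8 * s * (1 - s ^ 4) / (1 + s ^ 4) ^ 2) s := by
  refine (((hasDerivAt_pow 2 s).const_mul 4).div ((hasDerivAt_pow 4 s).const_add 1)
    (by positivity)).congr_deriv ?_
  norm_num
  ring

lemma hasDerivAt_scalingMode_deriv (s : ℝ) :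
    HasDerivAt (fun s : ℝ => 8 * s * (1 - s ^ 4) / (1 + s ^ 4) ^ 2)
      ((8 - 96 * s ^ 4 + 24 * s ^ 8) / (1 + s ^ 4) ^ 3) s := by
  have hD : 1 + s ^ 4 ≠ 0 := by positivity
  refine ((((hasDerivAt_id s).const_mul 8).mul ((hasDerivAt_pow 4 s).const_sub 1)).div
    (((hasDerivAt_pow 4 s).const_add 1).pow 2) (pow_ne_zero 2 hD)).congr_deriv ?_
  simp only [Pi.mul_apply, Pi.pow_apply, id]
  field_simp
  ring

/-- This is `LΦ = 0`, with `(4/r²) cos 2Q = 4/r² - 32r²/(1+r⁴)²`. -/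
lemma scalingMode_radial_eq {r : ℝ} (hr : r ≠ 0) :
    -((8 - 96 * r ^ 4 + 24 * r ^ 8) / (1 + r ^ 4) ^ 3) - 8 * r * (1 - r ^ 4) / (1 + r ^ 4) ^ 2 / r
      + (4 / r ^ 2 - 32 * r ^ 2 / (1 + r ^ 4) ^ 2) * scalingMode r = 0 := by
  have hD : 1 + r ^ 4 ≠ 0 := by positivity
  unfold scalingMode
  field_simp
  ring

lemma threshold_equation {r : ℝ} (hr : 0 < r) :
    - deriv (deriv (fun s : ℝ => 4 * s ^ ((5 : ℝ) / 2) / (1 + s ^ 4))) r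
      + (15 / (4 * r ^ 2)) * (4 * r ^ ((5 : ℝ) / 2) / (1 + r ^ 4))
      - (32 * r ^ 2 / (1 + r ^ 4) ^ 2) * (4 * r ^ ((5 : ℝ) / 2) / (1 + r ^ 4)) = 0 := by
  have hϕ : (fun s : ℝ => 4 * s ^ ((5 : ℝ) / 2) / (1 + s ^ 4)) =ᶠ[𝓝 r]
      fun s => √s * scalingMode s := by
    filter_upwards [Ioi_mem_nhds hr] with s hs
    rw [rpow_five_halves hs.le, scalingMode]
    ring
  rw [hϕ.deriv.deriv_eq, deriv_deriv_sqrt_mul hr (fun s _ => hasDerivAt_scalingMode s)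
    (hasDerivAt_scalingMode_deriv r), rpow_five_halves hr.le]
  have hL := scalingMode_radial_eq hr.ne'
  unfold scalingMode at hL ⊢
  linear_combination √r * hL

lemma tendsto_scalingMode_atTop : Tendsto scalingMode atTop (𝓝 0) := by
  have hbound : Tendsto (fun r : ℝ => 4 * (r ^ 2)⁻¹) atTop (𝓝 0) := by
    simpa using (tendsto_pow_atTop two_ne_zero).inv_tendsto_atTop.const_mul (4 : ℝ)
  refine squeeze_zero (fun r => by unfold scalingMode; positivity) (fun r => ?_) hbound
  rcases eq_or_ne r 0 with rfl | hr
  · simp [scalingMode]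
  rw [scalingMode, ← div_eq_mul_inv, div_le_div_iff₀ (by positivity) (by positivity)]
  nlinarith

lemma hasDerivAt_four_arctan_sq_sub_scalingMode (x : ℝ) :
    HasDerivAt (fun r => 4 * arctan (r ^ 2) - scalingMode r) (16 * x ^ 5 / (1 + x ^ 4) ^ 2) x := by
  refine ((((hasDerivAt_arctan (x ^ 2)).comp x (hasDerivAt_pow 2 x)).const_mul 4).sub
    (((hasDerivAt_pow 2 x).const_mul 4).div ((hasDerivAt_pow 4 x).const_add 1)
    (by positivity))).congr_deriv ?_
  have hD : 1 + x ^ 4 ≠ 0 := by positivity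
  norm_num
  field_simp
  ring

lemma tendsto_four_arctan_sq_sub_scalingMode_atTop :
    Tendsto (fun r => 4 * arctan (r ^ 2) - scalingMode r) atTop (𝓝 (2 * π)) := by
  have harctan : Tendsto (fun r : ℝ => arctan (r ^ 2)) atTop (𝓝 (π / 2)) :=
    (tendsto_nhds_of_tendsto_nhdsWithin tendsto_arctan_atTop).comp (tendsto_pow_atTop two_ne_zero)
  convert (harctan.const_mul 4).sub tendsto_scalingMode_atTop using 2
  ring

/-- For `H = −∂_r² + 15/(4r²) − 32r²/(1+r⁴)²`, the function `ϕ₀(r) = 4r^{5/2}/(1+r⁴)`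
satisfies `Hϕ₀ = 0` on `(0,∞)`, lies in `L²(0,∞)`, and `‖ϕ₀‖² = 2π`. -/
theorem threshold_eigenfunction :
    (∀ r : ℝ, 0 < r →
      - deriv (deriv (fun s : ℝ => 4 * s ^ ((5 : ℝ) / 2) / (1 + s ^ 4))) r
        + (15 / (4 * r ^ 2)) * (4 * r ^ ((5 : ℝ) / 2) / (1 + r ^ 4))
        - (32 * r ^ 2 / (1 + r ^ 4) ^ 2) * (4 * r ^ ((5 : ℝ) / 2) / (1 + r ^ 4)) = 0) ∧
    Integrable (fun r : ℝ => (4 * r ^ ((5 : ℝ) / 2) / (1 + r ^ 4)) ^ 2)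
      (volume.restrict (Set.Ioi 0)) ∧
    ∫ r in Set.Ioi (0 : ℝ), (4 * r ^ ((5 : ℝ) / 2) / (1 + r ^ 4)) ^ 2 = 2 * Real.pi := by
  have hF0 := (hasDerivAt_four_arctan_sq_sub_scalingMode 0).continuousAt.continuousWithinAt
    (s := Ici 0)
  have hF' (x : ℝ) (hx : x ∈ Ioi 0) : HasDerivAt (fun r => 4 * arctan (r ^ 2) - scalingMode r)
      ((4 * x ^ ((5 : ℝ) / 2) / (1 + x ^ 4)) ^ 2) x := by
    rw [sq_four_rpow_five_halves_div (le_of_lt hx)]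
    exact hasDerivAt_four_arctan_sq_sub_scalingMode x
  have hnonneg (x : ℝ) (_ : x ∈ Ioi 0) : 0 ≤ (4 * x ^ ((5 : ℝ) / 2) / (1 + x ^ 4)) ^ 2 :=
    sq_nonneg _
  have hlim := tendsto_four_arctan_sq_sub_scalingMode_atTop
  refine ⟨fun r hr => threshold_equation hr, integrableOn_Ioi_deriv_of_nonneg hF0 hF' hnonneg hlim,
    ?_⟩
  rw [integral_Ioi_of_hasDerivAt_of_nonneg hF0 hF' hnonneg hlim]
  simp [scalingMode]
end
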